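/- Let (W,S) be a Coxeter system of type I₂(m) with m odd, m ≥ 3: S = {s,t} and m_{s,t} = m. Then F = {{s}, {t}, S}, the cactus group C(W,S) is generated by c_{{s}} and c_S, and C(W,S) is isomorphic to ℤ/2ℤ ∗ ℤ/2ℤ via c_{{s}} ↦ u, c_S ↦ v, c_{{t}} ↦ vuv. -/

import Mathlib

/-!  Common framework: cactus groups of Coxeter systems. -/

namespace CactusFormal

open scoped Classical

variable {B : Type*} {W : Type*} [Group W] {M : CoxeterMatrix B}

/-- A subset `X` of `S` is irreducible (w.r.t. the Coxeter matrix `M`) if it admits no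
partition into two nonempty parts that pairwise commute (label `2`). -/
def IsIrred (M : CoxeterMatrix B) (X : Set B) : Prop :=
  ¬ ∃ X₁ X₂ : Set B, X₁.Nonempty ∧ X₂.Nonempty ∧ Disjoint X₁ X₂ ∧ X₁ ∪ X₂ = X ∧
      ∀ x ∈ X₁, ∀ y ∈ X₂, M x y = 2

/-- The standard parabolic subgroup `W_X`. -/
def parabolic (cs : CoxeterSystem M W) (X : Set B) : Subgroup W :=
  Subgroup.closure (cs.simple '' X)

/-- `w` is the longest element `ω_X`: a nontrivial element of `W_X` permuting
the simple reflections indexed by `X` by conjugation. -/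
def IsOmega (cs : CoxeterSystem M W) (X : Set B) (w : W) : Prop :=
  w ∈ parabolic cs X ∧ w ≠ 1 ∧
    ∀ x ∈ X, ∃ x' ∈ X, w * cs.simple x * w⁻¹ = cs.simple x'

/-- The element `ω_X` (junk value `1` if it does not exist). -/
noncomputable def omega (cs : CoxeterSystem M W) (X : Set B) : W :=
  if h : ∃ w, IsOmega cs X w then h.choose else 1

/-- The family `F` of nonempty subsets `X` of `S` with `W_X` finite and irreducible. -/
def F (cs : CoxeterSystem M W) : Set (Set B) :=
  {X | X.Nonempty ∧ (parabolic cs X : Set W).Finite ∧ IsIrred M X}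

/-- The subset `ω_X Y ω_X⁻¹` of `S`, i.e. the set of indices whose simple reflection is
the conjugate by `ω_X` of a simple reflection indexed by `Y`. -/
def omegaSet (cs : CoxeterSystem M W) (X Y : Set B) : Set B :=
  {z | ∃ y ∈ Y, cs.simple z = omega cs X * cs.simple y * (omega cs X)⁻¹}

/-- `Ω(X)`: the elements `Y ∈ F`, `Y ≠ X`, with `ω_X Y ω_X ⊆ S`. -/
def Omega (cs : CoxeterSystem M W) (X : Set B) : Set (Set B) :=
  {Y | Y ∈ F cs ∧ Y ≠ X ∧
    ∀ y ∈ Y, ∃ z, omega cs X * cs.simple y * (omega cs X)⁻¹ = cs.simple z}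

/-- `Ω₀(X)`: the elements of `F` properly contained in `X`. -/
def Omega0 (cs : CoxeterSystem M W) (X : Set B) : Set (Set B) :=
  {Y | Y ∈ F cs ∧ Y ⊂ X}

/-- `Ω_∞(X)`: the elements `Y` of `F` with `X ∪ Y` not irreducible. -/
def OmegaInf (cs : CoxeterSystem M W) (X : Set B) : Set (Set B) :=
  {Y | Y ∈ F cs ∧ ¬ IsIrred M (X ∪ Y)}

/-- The defining relators of the cactus group:
(R1) `c_X² = 1`; (R2) `c_X c_Y = c_{ω_X(Y)} c_X` for `Y ∈ Ω₀(X)`;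
(R3) `c_X c_Y = c_Y c_X` for `Y ∈ Ω_∞(X)`. -/
def cactusRels (cs : CoxeterSystem M W) : Set (FreeGroup (F cs)) :=
  {r | (∃ X : F cs, r = .of X * .of X) ∨
    (∃ X Y Z : F cs, (Y : Set B) ∈ Omega0 cs X ∧ (Z : Set B) = omegaSet cs X Y ∧
      r = .of X * .of Y * (.of Z * .of X)⁻¹) ∨
    (∃ X Y : F cs, (Y : Set B) ∈ OmegaInf cs X ∧
      r = .of X * .of Y * (.of Y * .of X)⁻¹)}

/-- The cactus group `C(W,S)`. -/
abbrev Cactus (cs : CoxeterSystem M W) := PresentedGroup (cactusRels cs)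

/-- The generator `c_X` of the cactus group, for `X ∈ F`. -/
def gen (cs : CoxeterSystem M W) (X : F cs) : Cactus cs := PresentedGroup.of X

/-- The relation `≡₀` on `F`: `Y ≡₀ Z` iff `Z = ω_X Y ω_X` for some `X ∈ F`. -/
def equivZero (cs : CoxeterSystem M W) (Y Z : Set B) : Prop :=
  Y ∈ F cs ∧ Z ∈ F cs ∧ ∃ X ∈ F cs, Z = omegaSet cs X Y

/-- The relation `≡`: the reflexive-transitive closure of `≡₀`. -/
def cEquiv (cs : CoxeterSystem M W) : Set B → Set B → Prop :=
  Relation.ReflTransGen (equivZero cs)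

/-- The set of `≡`-equivalence classes on `F`. -/
def classes (cs : CoxeterSystem M W) :=
  Quot (fun X Y : F cs => cEquiv cs X Y)

/-- `m`: the number of `≡`-equivalence classes on `F`. -/
noncomputable def numClasses (cs : CoxeterSystem M W) : ℕ := Nat.card (classes cs)

/-- `Λ` is a transversal for `≡`: it contains exactly one element of each class. -/
def IsTransversal (cs : CoxeterSystem M W) (Λ : Set (Set B)) : Prop :=
  Λ ⊆ F cs ∧ ∀ X ∈ F cs, ∃! Y, Y ∈ Λ ∧ cEquiv cs X Y

/-- A section `(Λ, Ψ)` for `(W,S)`, writing `Ψ X = (X̄, X̊)`. -/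
structure IsSection (cs : CoxeterSystem M W) (Λ : Set (Set B))
    (Ψ : Set B → Set B × Set B) : Prop where
  subset : Λ ⊆ F cs
  eq_of_mem : ∀ X ∈ Λ, Ψ X = (X, X)
  bar_mem : ∀ X ∈ F cs, (Ψ X).1 ∈ Λ
  ring_mem : ∀ X ∈ F cs, (Ψ X).2 ∈ Λ
  ring_subset : ∀ X ∈ F cs, (Ψ X).2 ⊆ (Ψ X).1
  omega_bar_ring : ∀ X ∈ F cs, omegaSet cs (Ψ X).1 (Ψ X).2 = X
  reducible_pairs : ∀ Y ∈ F cs, ∀ Z ∈ F cs, ¬ IsIrred M (Y ∪ Z) →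
    ∃ X ∈ Λ, Y ∈ Omega cs X ∧ Z ∈ Omega cs X ∧
      (omegaSet cs X Y ∈ Λ ∨ omegaSet cs X Z ∈ Λ)

/-- `Λ` is a cross section with section map `Ψ`: additionally, for every `X ∈ F`,
`Ψ X` is the unique pair `(Y, Z) ∈ Λ × Λ` with `ω_Y(Z) = X`
(where `ω_Y(Z)` is defined for `Z ∈ Ω(Y) ∪ {Y}`). -/
def IsCrossSection (cs : CoxeterSystem M W) (Λ : Set (Set B))
    (Ψ : Set B → Set B × Set B) : Prop :=
  IsSection cs Λ Ψ ∧ ∀ X ∈ F cs, ∀ Y Z : Set B,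
    (Y ∈ Λ ∧ Z ∈ Λ ∧ (Z ∈ Omega cs Y ∨ Z = Y) ∧ omegaSet cs Y Z = X) ↔ Ψ X = (Y, Z)




private lemma setFin2 (X : Set (Fin 2)) : X = ∅ ∨ X = {0} ∨ X = {1} ∨ X = Set.univ := by
  by_cases h0 : (0 : Fin 2) ∈ X <;> by_cases h1 : (1 : Fin 2) ∈ X
  · right; right; right; ext x; fin_cases x <;> simp [h0, h1]
  · right; left; ext x; fin_cases x <;> simp [h0, h1]
  · right; right; left; ext x; fin_cases x <;> simp [h0, h1]
  · left; ext x; fin_cases x <;> simp [h0, h1]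

private lemma conj_zpow' {G : Type*} [Group G] (a r : G) (ha : a * a = 1) (i : ℤ) :
    a * r ^ i * a = (a * r * a) ^ i := by
  have hainv : a⁻¹ = a := inv_eq_of_mul_eq_one_right ha
  calc a * r ^ i * a = a * r ^ i * a⁻¹ := by rw [hainv]
    _ = (a * r * a⁻¹) ^ i := by rw [conj_zpow]
    _ = (a * r * a) ^ i := by rw [hainv]

private lemma grp1 {G : Type*} [Group G] {a b : G} {m k : ℕ} (ha : a * a = 1) (hb : b * b = 1)
    (hrm : (a * b) ^ m = 1) (hk : m = 2 * k + 1) :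
    ((a * (b * a) ^ k) * (a * (b * a) ^ k) = 1) ∧
    ((a * (b * a) ^ k) * a * (a * (b * a) ^ k) = b) ∧
    ((a * (b * a) ^ k) * b * (a * (b * a) ^ k) = a) := by
  have hainv : a⁻¹ = a := inv_eq_of_mul_eq_one_right ha
  have hbinv : b⁻¹ = b := inv_eq_of_mul_eq_one_right hb
  have hba : b * a = (a * b)⁻¹ := by rw [mul_inv_rev, hainv, hbinv]
  have hcl_a : ∀ w : G, a * (a * w) = w := fun w => by rw [← mul_assoc, ha, one_mul]
  have hcl_b : ∀ w : G, b * (b * w) = w := fun w => by rw [← mul_assoc, hb, one_mul]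
  have h2k : (b * a) ^ (2 * k) = a * b := by
    have h1 : (b * a) ^ m = 1 := by rw [hba, inv_pow, hrm, inv_one]
    have h2 : (b * a) ^ (2 * k) * (b * a) = 1 := by rw [← pow_succ, ← hk, h1]
    have h3 := eq_inv_of_mul_eq_one_left h2
    rw [h3, mul_inv_rev, hainv, hbinv]
  have hswap1 : ∀ n : ℕ, (b * a) ^ n * a = a * (a * b) ^ n := by
    intro n; induction n with
    | zero => simp
    | succ n ih =>
      rw [pow_succ', mul_assoc, ih]
      simp only [pow_succ', mul_assoc, hcl_a, hcl_b]
  have hswap1b : ∀ n : ℕ, (b * a) ^ n * b = b * (a * b) ^ n := by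
    intro n; induction n with
    | zero => simp
    | succ n ih =>
      rw [pow_succ', mul_assoc, ih]
      simp only [pow_succ', mul_assoc, hcl_a, hcl_b]
  have hswap2 : ∀ n : ℕ, (a * b) ^ n * a = a * (b * a) ^ n := by
    intro n; induction n with
    | zero => simp
    | succ n ih =>
      rw [pow_succ', mul_assoc, ih]
      simp only [pow_succ', mul_assoc, hcl_a, hcl_b]
  have hpow2 : (b * a) ^ k * (b * a) ^ k = a * b := by rw [← pow_add, ← two_mul, h2k]
  refine ⟨?_, ?_, ?_⟩
  · calc a * (b * a) ^ k * (a * (b * a) ^ k)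
        = a * (((b * a) ^ k * a) * (b * a) ^ k) := by rw [mul_assoc, ← mul_assoc ((b*a)^k)]
      _ = a * ((a * (a * b) ^ k) * (b * a) ^ k) := by rw [hswap1]
      _ = (a * b) ^ k * (b * a) ^ k := by rw [mul_assoc a, hcl_a]
      _ = (a * b) ^ k * ((a * b) ^ k)⁻¹ := by rw [hba, inv_pow]
      _ = 1 := mul_inv_cancel _
  · calc a * (b * a) ^ k * a * (a * (b * a) ^ k)
        = a * (b * a) ^ k * (a * (a * (b * a) ^ k)) := by rw [mul_assoc]
      _ = a * (b * a) ^ k * (b * a) ^ k := by rw [hcl_a]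
      _ = a * (a * b) := by rw [mul_assoc, hpow2]
      _ = b := hcl_a b
  · calc a * (b * a) ^ k * b * (a * (b * a) ^ k)
        = a * ((b * a) ^ k * b) * (a * (b * a) ^ k) := by rw [mul_assoc a]
      _ = a * (b * (a * b) ^ k) * (a * (b * a) ^ k) := by rw [hswap1b]
      _ = (a * b) * ((a * b) ^ k * a * (b * a) ^ k) := by
          simp only [mul_assoc]
      _ = a := by
          rw [hswap2]; simp only [mul_assoc]; rw [hpow2]
          simp only [mul_assoc, hcl_a, hcl_b, hb, mul_one]


private lemma grp2 {G : Type*} [Group G] {a b z : G} {m : ℕ} (ha : a * a = 1) (hb : b * b = 1)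
    (hdvd : ∀ i : ℤ, (a * b) ^ i = 1 ↔ (m : ℤ) ∣ i) (hmo : Odd m) (hm3 : 3 ≤ m)
    (hz : ∃ i : ℤ, z = (a * b) ^ i ∨ z = (a * b) ^ i * a)
    (hza : z * a = a * z) (hzb : z * b = b * z) : z = 1 := by
  have hainv : a⁻¹ = a := inv_eq_of_mul_eq_one_right ha
  have hbinv : b⁻¹ = b := inv_eq_of_mul_eq_one_right hb
  have hconj : ∀ i : ℤ, a * (a * b) ^ i * a = (a * b) ^ (-i) := by
    intro i
    rw [conj_zpow' a (a*b) ha i]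
    have h1 : a * (a * b) * a = (a * b)⁻¹ := by
      rw [← mul_assoc, ha, one_mul, mul_inv_rev, hainv, hbinv]
    rw [h1, inv_zpow, ← zpow_neg]
  have hcop : IsCoprime (m : ℤ) 2 := by
    rw [Int.isCoprime_iff_gcd_eq_one]
    have h2 : Nat.gcd m 2 = 1 := Nat.coprime_two_right.mpr hmo
    rw [show ((2:ℤ)) = ((2:ℕ):ℤ) by norm_num, Int.gcd_natCast_natCast]
    exact h2
  have htwo : ∀ i : ℤ, (a * b) ^ (2 * i) = 1 → (a * b) ^ i = 1 := by
    intro i h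
    exact (hdvd i).2 (hcop.dvd_of_dvd_mul_left ((hdvd _).1 h))
  obtain ⟨i, hi | hi⟩ := hz
  · -- z = (a*b)^i, commutes with a
    have h1 : a * (a * b) ^ i = (a * b) ^ (-i) * a := by
      rw [← hconj i, mul_assoc, mul_assoc, ha, mul_one]
    have h2 : (a * b) ^ i = (a * b) ^ (-i) := by
      have := hza
      rw [hi] at this
      -- (a*b)^i * a = a * (a*b)^i = (a*b)^(-i) * a
      rw [h1] at this
      exact mul_right_cancel this
    have h3 : (a * b) ^ (2 * i) = 1 := by
      rw [two_mul, zpow_add]; nth_rewrite 1 [h2]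
      rw [← zpow_add, neg_add_cancel, zpow_zero]
    rw [hi, htwo i h3]
  · -- z = (a*b)^i * a
    exfalso
    have h1 : a * (a * b) ^ i = (a * b) ^ (-i) * a := by
      rw [← hconj i, mul_assoc, mul_assoc, ha, mul_one]
    have h2 : (a * b) ^ i = (a * b) ^ (-i) := by
      have := hza
      rw [hi] at this
      -- (a*b)^i * a * a = a * ((a*b)^i * a)
      rw [mul_assoc, ha, mul_one, ← mul_assoc, h1, mul_assoc, ha, mul_one] at this
      exact this
    have h3 : (a * b) ^ (2 * i) = 1 := by
      rw [two_mul, zpow_add]; nth_rewrite 1 [h2]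
      rw [← zpow_add, neg_add_cancel, zpow_zero]
    have h4 : (a * b) ^ i = 1 := htwo i h3
    have hza' : z = a := by rw [hi, h4, one_mul]
    -- a commutes with b : (a*b)^2 = 1
    have h5 : (a * b) ^ (2 : ℤ) = 1 := by
      have : a * b = b * a := by rw [← hza', hzb]
      calc (a * b) ^ (2:ℤ) = (a * b) * (a * b) := by rw [zpow_two]
        _ = (a * b) * (b * a) := by rw [← this]
        _ = a * (b * (b * a)) := by rw [mul_assoc]
        _ = 1 := by rw [← mul_assoc b b, hb, one_mul, ha]
    have h6 := (hdvd 2).1 h5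
    have h7 : (m : ℤ) ≤ 2 := Int.le_of_dvd (by norm_num) h6
    have : (3 : ℤ) ≤ (m : ℤ) := by exact_mod_cast hm3
    omega

private lemma zpow_eq_pow_val {G : Type*} [Group G] (r : G) (m : ℕ) [NeZero m]
    (hrm : r ^ m = 1) (i : ℤ) : r ^ i = r ^ ((i : ZMod m).val) := by
  have hdvd2 : (m : ℤ) ∣ i - ((i : ZMod m).val : ℤ) := by
    rw [← ZMod.intCast_zmod_eq_zero_iff_dvd]
    push_cast
    rw [ZMod.natCast_val, ZMod.cast_id, sub_self]
  obtain ⟨j, hj⟩ := hdvd2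
  have heq : i = ((i : ZMod m).val : ℤ) + (m : ℤ) * j := by omega
  calc r ^ i = r ^ (((i : ZMod m).val : ℤ) + (m : ℤ) * j) := by rw [← heq]
    _ = r ^ ((i : ZMod m).val : ℤ) * (r ^ (m : ℤ)) ^ j := by rw [zpow_add, zpow_mul]
    _ = r ^ ((i : ZMod m).val) := by rw [zpow_natCast, zpow_natCast, hrm, one_zpow, mul_one]

private def involHom {G : Type*} [Group G] (g : G) (hg : g * g = 1) :
    Multiplicative (ZMod 2) →* G where
  toFun x := g ^ (Multiplicative.toAdd x).val
  map_one' := by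
    show g ^ (0 : ZMod 2).val = 1
    rw [ZMod.val_zero, pow_zero]
  map_mul' x y := by
    show g ^ (Multiplicative.toAdd x + Multiplicative.toAdd y).val
      = g ^ (Multiplicative.toAdd x).val * g ^ (Multiplicative.toAdd y).val
    have h2 : ∀ i : ZMod 2, i = 0 ∨ i = 1 := by decide
    have hv0 : (0 : ZMod 2).val = 0 := rfl
    have hv1 : (1 : ZMod 2).val = 1 := rfl
    have h11 : (1 + 1 : ZMod 2) = 0 := by decide
    rcases h2 (Multiplicative.toAdd x) with h | h <;> rcases h2 (Multiplicative.toAdd y) with h' | h' <;>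
      rw [h, h'] <;> simp [hv0, hv1, h11, hg]

private lemma involHom_apply {G : Type*} [Group G] (g : G) (hg : g * g = 1) :
    involHom g hg (Multiplicative.ofAdd (1 : ZMod 2)) = g := by
  show g ^ (1 : ZMod 2).val = g
  have : (1 : ZMod 2).val = 1 := rfl
  rw [this, pow_one]


private lemma dihedral_facts {W : Type*} [Group W] {M : CoxeterMatrix (Fin 2)}
    (cs : CoxeterSystem M W) (m : ℕ) (hm : M 0 1 = m) (hmo : Odd m) (hm3 : 3 ≤ m) :
    (Set.univ : Set W).Finite ∧
    cs.simple 0 ≠ cs.simple 1 ∧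
    (∀ i : ℤ, (cs.simple 0 * cs.simple 1) ^ i = 1 ↔ (m : ℤ) ∣ i) ∧
    (∀ w : W, ∃ i : ℤ, w = (cs.simple 0 * cs.simple 1) ^ i ∨
       w = (cs.simple 0 * cs.simple 1) ^ i * cs.simple 0) := by
  haveI : NeZero m := ⟨by omega⟩
  have haa : cs.simple 0 * cs.simple 0 = 1 := cs.simple_mul_simple_self 0
  have hbb : cs.simple 1 * cs.simple 1 = 1 := cs.simple_mul_simple_self 1
  have hrm : (cs.simple 0 * cs.simple 1) ^ m = 1 := by
    rw [← hm]; exact cs.simple_mul_simple_pow 0 1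
  -- the dihedral homomorphism
  have keyr : ∀ d : ZMod m, (DihedralGroup.r d : DihedralGroup m) ^ m = 1 := by
    intro d
    have h1 : (DihedralGroup.r d : DihedralGroup m) = (DihedralGroup.r 1) ^ d.val := by
      rw [DihedralGroup.r_one_pow, ZMod.natCast_val, ZMod.cast_id]
    rw [h1, ← pow_mul, mul_comm, pow_mul, DihedralGroup.r_one_pow_n, one_pow]
  have hM' : ∀ i i' : Fin 2, i ≠ i' → M i i' = m := by
    intro i i' h
    fin_cases i <;> fin_cases i'
    · exact absurd rfl h
    · exact hm
    · rw [M.symmetric]; exact hm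
    · exact absurd rfl h
  have hf : CoxeterMatrix.IsLiftable M (fun i : Fin 2 => DihedralGroup.sr (i.val : ZMod m)) := by
    intro i i'
    by_cases h : i = i'
    · subst h
      rw [M.diagonal, pow_one, DihedralGroup.sr_mul_sr, sub_self]
      rfl
    · rw [hM' i i' h, DihedralGroup.sr_mul_sr, keyr]
  set φ := cs.lift ⟨fun i : Fin 2 => DihedralGroup.sr (i.val : ZMod m), hf⟩ with hφ_def
  have hφ0 : φ (cs.simple 0) = DihedralGroup.sr 0 := by
    rw [hφ_def, cs.lift_apply_simple]
    norm_num
  have hφ1 : φ (cs.simple 1) = DihedralGroup.sr 1 := by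
    rw [hφ_def, cs.lift_apply_simple]
    norm_num
  have hφr : φ (cs.simple 0 * cs.simple 1) = DihedralGroup.r 1 := by
    rw [map_mul, hφ0, hφ1, DihedralGroup.sr_mul_sr, sub_zero]
  have hdvd : ∀ i : ℤ, (cs.simple 0 * cs.simple 1) ^ i = 1 ↔ (m : ℤ) ∣ i := by
    intro i
    constructor
    · intro h
      have h2 : (DihedralGroup.r 1 : DihedralGroup m) ^ i = 1 := by
        rw [← hφr, ← map_zpow, h, map_one]
      have h3 := orderOf_dvd_iff_zpow_eq_one.mpr h2
      rwa [DihedralGroup.orderOf_r_one] at h3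
    · rintro ⟨j, rfl⟩
      rw [zpow_mul, zpow_natCast, hrm, one_zpow]
  have hne : cs.simple 0 ≠ cs.simple 1 := by
    intro h
    have h1 : (cs.simple 0 * cs.simple 1) ^ (1 : ℤ) = 1 := by rw [zpow_one, h, hbb]
    have h2 := (hdvd 1).1 h1
    have h3 : (m : ℤ) ≤ 1 := Int.le_of_dvd one_pos h2
    have h4 : (3 : ℤ) ≤ (m : ℤ) := by exact_mod_cast hm3
    omega
  -- classification of elements
  have hb_eq : (cs.simple 0 * cs.simple 1)⁻¹ * cs.simple 0 = cs.simple 1 := by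
    rw [mul_inv_rev, cs.inv_simple, cs.inv_simple, mul_assoc, haa, mul_one]
  have fin2cases : ∀ x : Fin 2, x = 0 ∨ x = 1 := by decide
  have hP : ∀ w : W, ∃ i : ℤ, w = (cs.simple 0 * cs.simple 1) ^ i ∨
      w = (cs.simple 0 * cs.simple 1) ^ i * cs.simple 0 := by
    intro w
    induction w using cs.simple_induction_right with
    | one => exact ⟨0, Or.inl (by rw [zpow_zero])⟩
    | mul_simple_right w i ih =>
      obtain ⟨j, hj | hj⟩ := ih
      · rcases fin2cases i with rfl | rfl
        · exact ⟨j, Or.inr (by rw [hj])⟩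
        · refine ⟨j - 1, Or.inr ?_⟩
          rw [hj, zpow_sub_one, mul_assoc, hb_eq]
      · rcases fin2cases i with rfl | rfl
        · exact ⟨j, Or.inl (by rw [hj, mul_assoc, haa, mul_one])⟩
        · exact ⟨j + 1, Or.inl (by rw [hj, zpow_add_one, mul_assoc])⟩
  -- finiteness
  have hfin : (Set.univ : Set W).Finite := by
    apply (Set.finite_range (fun p : ZMod m × Bool =>
      (cs.simple 0 * cs.simple 1) ^ (p.1.val) * (cond p.2 (cs.simple 0) 1))).subset
    rintro w -
    obtain ⟨i, hi | hi⟩ := hP w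
    · exact ⟨((i : ZMod m), false), by
        simp only [cond_false, mul_one]
        rw [← zpow_eq_pow_val _ m hrm i, hi]⟩
    · exact ⟨((i : ZMod m), true), by
        simp only [cond_true]
        rw [← zpow_eq_pow_val _ m hrm i, hi]⟩
  exact ⟨hfin, hne, hdvd, hP⟩




private lemma sq_one_conj {G : Type*} [Group G] {x y : G} (hx : x * x = 1) (hy : y * y = 1) :
    (y * x * y) * (y * x * y) = 1 := by
  have hcly : ∀ w : G, y * (y * w) = w := fun w => by rw [← mul_assoc, hy, one_mul]
  calc (y * x * y) * (y * x * y) = y * (x * (y * (y * (x * y)))) := by simp only [mul_assoc]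
    _ = y * (x * (x * y)) := by rw [hcly]
    _ = y * y := by rw [← mul_assoc x x, hx, one_mul]
    _ = 1 := hy

private lemma presented_rel {α : Type*} {rels : Set (FreeGroup α)} {x : FreeGroup α}
    (h : x ∈ rels) : PresentedGroup.mk rels x = 1 :=
  (QuotientGroup.eq_one_iff x).mpr (Subgroup.subset_normalClosure h)

private lemma i2_facts {W : Type*} [Group W] {M : CoxeterMatrix (Fin 2)}
    (cs : CoxeterSystem M W) (m : ℕ) (hm : M 0 1 = m) (hmo : Odd m) (hm3 : 3 ≤ m) :
    F cs = {{0}, {1}, Set.univ} ∧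
    (∀ x : Fin 2, IsIrred M {x}) ∧ IsIrred M Set.univ ∧
    omegaSet cs Set.univ {0} = ({1} : Set (Fin 2)) ∧
    omegaSet cs Set.univ {1} = ({0} : Set (Fin 2)) := by
  obtain ⟨hfin, hne, hdvd, hP⟩ := dihedral_facts cs m hm hmo hm3
  have haa : cs.simple 0 * cs.simple 0 = 1 := cs.simple_mul_simple_self 0
  have hbb : cs.simple 1 * cs.simple 1 = 1 := cs.simple_mul_simple_self 1
  have hrm : (cs.simple 0 * cs.simple 1) ^ m = 1 := by
    rw [← hm]; exact cs.simple_mul_simple_pow 0 1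
  have fin2cases : ∀ x : Fin 2, x = 0 ∨ x = 1 := by decide
  have irrS : ∀ x : Fin 2, IsIrred M {x} := by
    rintro x ⟨X₁, X₂, ⟨a₁, h₁⟩, ⟨a₂, h₂⟩, hd, hu, -⟩
    have e1 : a₁ ∈ ({x} : Set (Fin 2)) := hu ▸ Set.mem_union_left _ h₁
    have e2 : a₂ ∈ ({x} : Set (Fin 2)) := hu ▸ Set.mem_union_right _ h₂
    rw [Set.mem_singleton_iff] at e1 e2
    exact Set.disjoint_left.mp hd h₁ (by rw [e1, ← e2]; exact h₂)
  have irrU : IsIrred M Set.univ := by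
    rintro ⟨X₁, X₂, ⟨a₁, h₁⟩, ⟨a₂, h₂⟩, hd, hu, hcomm⟩
    have hne12 : a₁ ≠ a₂ := fun h => Set.disjoint_left.mp hd h₁ (h ▸ h₂)
    have h12 : M a₁ a₂ = 2 := hcomm a₁ h₁ a₂ h₂
    have hMa : M a₁ a₂ = m := by
      rcases fin2cases a₁ with rfl | rfl <;> rcases fin2cases a₂ with rfl | rfl
      · exact absurd rfl hne12
      · exact hm
      · rw [M.symmetric]; exact hm
      · exact absurd rfl hne12
    omega
  have hF : F cs = {{0}, {1}, Set.univ} := by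
    ext X
    constructor
    · rintro ⟨hXne, -, -⟩
      rcases setFin2 X with rfl | rfl | rfl | rfl
      · exact absurd hXne (by simp)
      · exact Or.inl rfl
      · exact Or.inr (Or.inl rfl)
      · exact Or.inr (Or.inr rfl)
    · intro h
      have hfin' : ∀ Y : Set (Fin 2), ((parabolic cs Y : Subgroup W) : Set W).Finite :=
        fun Y => hfin.subset (Set.subset_univ _)
      simp only [Set.mem_insert_iff, Set.mem_singleton_iff] at h
      rcases h with rfl | rfl | rfl
      · exact ⟨⟨0, rfl⟩, hfin' _, irrS 0⟩
      · exact ⟨⟨1, rfl⟩, hfin' _, irrS 1⟩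
      · exact ⟨⟨0, Set.mem_univ 0⟩, hfin' _, irrU⟩
  obtain ⟨k, hk⟩ := hmo
  obtain ⟨hw1, hw2, hw3⟩ := grp1 haa hbb hrm hk
  have hw0inv : (cs.simple 0 * (cs.simple 1 * cs.simple 0) ^ k)⁻¹
      = cs.simple 0 * (cs.simple 1 * cs.simple 0) ^ k := inv_eq_of_mul_eq_one_right hw1
  have hw0ne : cs.simple 0 * (cs.simple 1 * cs.simple 0) ^ k ≠ 1 := by
    intro h
    apply hne
    have h2 := hw2
    rw [h, one_mul, mul_one] at h2
    exact h2
  have hpar : parabolic cs Set.univ = ⊤ := by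
    show Subgroup.closure _ = ⊤
    rw [Set.image_univ]
    exact cs.subgroup_closure_range_simple
  have hex : ∃ w, IsOmega cs Set.univ w := by
    refine ⟨cs.simple 0 * (cs.simple 1 * cs.simple 0) ^ k, ?_, hw0ne, ?_⟩
    · rw [hpar]; exact Subgroup.mem_top _
    · intro x _
      rcases fin2cases x with rfl | rfl
      · exact ⟨1, Set.mem_univ 1, by rw [hw0inv]; exact hw2⟩
      · exact ⟨0, Set.mem_univ 0, by rw [hw0inv]; exact hw3⟩
  have hω : IsOmega cs Set.univ (omega cs Set.univ) := by
    unfold omega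
    rw [dif_pos hex]
    exact hex.choose_spec
  obtain ⟨hωmem, hωne, hωperm⟩ := hω
  obtain ⟨x0, -, h0⟩ := hωperm 0 (Set.mem_univ 0)
  obtain ⟨x1, -, h1⟩ := hωperm 1 (Set.mem_univ 1)
  have hconj_mul : ∀ s t : W, omega cs Set.univ * s * (omega cs Set.univ)⁻¹ = t →
      omega cs Set.univ * s = s * omega cs Set.univ → False ∨ True := fun _ _ _ _ => Or.inr trivial
  have hconj_comm : ∀ s t : W, omega cs Set.univ * s * (omega cs Set.univ)⁻¹ = t →
      omega cs Set.univ * s = t * omega cs Set.univ := by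
    intro s t h
    calc omega cs Set.univ * s
        = (omega cs Set.univ * s * (omega cs Set.univ)⁻¹) * omega cs Set.univ := by
          rw [inv_mul_cancel_right]
      _ = t * omega cs Set.univ := by rw [h]
  have hinj : ∀ s t : W, omega cs Set.univ * s * (omega cs Set.univ)⁻¹
      = omega cs Set.univ * t * (omega cs Set.univ)⁻¹ → s = t := by
    intro s t h
    have h2 := mul_right_cancel h
    exact mul_left_cancel h2
  have hc0 : omega cs Set.univ * cs.simple 0 * (omega cs Set.univ)⁻¹ = cs.simple 1 := by
    rcases fin2cases x0 with rfl | rfl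
    · exfalso
      rcases fin2cases x1 with rfl | rfl
      · exact hne (hinj _ _ (by rw [h0, h1]))
      · exact hωne (grp2 haa hbb hdvd ⟨k, hk⟩ hm3 (hP _)
          (hconj_comm _ _ h0) (hconj_comm _ _ h1))
    · exact h0
  have hc1 : omega cs Set.univ * cs.simple 1 * (omega cs Set.univ)⁻¹ = cs.simple 0 := by
    rcases fin2cases x1 with rfl | rfl
    · exact h1
    · exact absurd (hinj _ _ (by rw [hc0, h1])) hne
  have hS0 : omegaSet cs Set.univ {0} = ({1} : Set (Fin 2)) := by
    ext z
    simp only [omegaSet, Set.mem_setOf_eq, Set.mem_singleton_iff]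
    constructor
    · rintro ⟨y, hy, hz⟩
      obtain rfl : y = 0 := hy
      rw [hc0] at hz
      rcases fin2cases z with rfl | rfl
      · exact absurd hz hne
      · rfl
    · rintro rfl
      exact ⟨0, rfl, hc0.symm⟩
  have hS1 : omegaSet cs Set.univ {1} = ({0} : Set (Fin 2)) := by
    ext z
    simp only [omegaSet, Set.mem_setOf_eq, Set.mem_singleton_iff]
    constructor
    · rintro ⟨y, hy, hz⟩
      obtain rfl : y = 1 := hy
      rw [hc1] at hz
      rcases fin2cases z with rfl | rfl
      · rfl
      · exact absurd hz.symm hne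
    · rintro rfl
      exact ⟨1, rfl, hc1.symm⟩
  exact ⟨hF, irrS, irrU, hS0, hS1⟩

open Classical in
private noncomputable def fmap {W : Type*} [Group W] {M : CoxeterMatrix (Fin 2)}
    (cs : CoxeterSystem M W) (X : F cs) :
    Monoid.Coprod (Multiplicative (ZMod 2)) (Multiplicative (ZMod 2)) :=
  if (X : Set (Fin 2)) = {0} then Monoid.Coprod.inl (Multiplicative.ofAdd 1)
  else if (X : Set (Fin 2)) = Set.univ then Monoid.Coprod.inr (Multiplicative.ofAdd 1)
  else Monoid.Coprod.inr (Multiplicative.ofAdd 1) *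
    Monoid.Coprod.inl (Multiplicative.ofAdd 1) * Monoid.Coprod.inr (Multiplicative.ofAdd 1)

/-- Type `I₂(m)`, `m` odd, `m ≥ 3`: `F = {{s},{t},S}`, `C(W,S)` is generated by
`c_{{s}}` and `c_S`, and `C(W,S) ≅ ℤ/2ℤ ∗ ℤ/2ℤ` via `c_{{s}} ↦ u`, `c_S ↦ v`,
`c_{{t}} ↦ vuv`. -/
theorem statement13 {W : Type*} [Group W] {M : CoxeterMatrix (Fin 2)}
    (cs : CoxeterSystem M W) (m : ℕ) (hm : M 0 1 = m) (hmo : Odd m) (hm3 : 3 ≤ m) :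
    F cs = {{0}, {1}, (Set.univ : Set (Fin 2))} ∧
    ∃ (h0 : ({0} : Set (Fin 2)) ∈ F cs) (h1 : ({1} : Set (Fin 2)) ∈ F cs)
      (hS : (Set.univ : Set (Fin 2)) ∈ F cs),
      Subgroup.closure {gen cs ⟨{0}, h0⟩, gen cs ⟨Set.univ, hS⟩} = ⊤ ∧
      ∃ φ : Cactus cs ≃* Monoid.Coprod (Multiplicative (ZMod 2)) (Multiplicative (ZMod 2)),
        φ (gen cs ⟨{0}, h0⟩) = Monoid.Coprod.inl (Multiplicative.ofAdd (1 : ZMod 2)) ∧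
        φ (gen cs ⟨Set.univ, hS⟩) = Monoid.Coprod.inr (Multiplicative.ofAdd (1 : ZMod 2)) ∧
        φ (gen cs ⟨{1}, h1⟩) =
          Monoid.Coprod.inr (Multiplicative.ofAdd (1 : ZMod 2)) *
            Monoid.Coprod.inl (Multiplicative.ofAdd (1 : ZMod 2)) *
            Monoid.Coprod.inr (Multiplicative.ofAdd (1 : ZMod 2)) := by
  classical
  obtain ⟨hF, irrS, irrU, hS0, hS1⟩ := i2_facts cs m hm hmo hm3
  have fin2cases : ∀ x : Fin 2, x = 0 ∨ x = 1 := by decide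
  have h0 : ({0} : Set (Fin 2)) ∈ F cs := by rw [hF]; exact Set.mem_insert _ _
  have h1 : ({1} : Set (Fin 2)) ∈ F cs := by
    rw [hF]; exact Set.mem_insert_of_mem _ (Set.mem_insert _ _)
  have hS : (Set.univ : Set (Fin 2)) ∈ F cs := by
    rw [hF]; exact Set.mem_insert_of_mem _ (Set.mem_insert_of_mem _ rfl)
  have hne01 : ({0} : Set (Fin 2)) ≠ {1} := by
    intro h
    have h2 : (0 : Fin 2) ∈ ({1} : Set (Fin 2)) := h ▸ rfl
    have h3 : (0 : Fin 2) = 1 := h2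
    exact absurd h3 (by decide)
  have hne0U : ({0} : Set (Fin 2)) ≠ Set.univ := by
    intro h
    have h2 : (1 : Fin 2) ∈ ({0} : Set (Fin 2)) := h.symm ▸ Set.mem_univ 1
    have h3 : (1 : Fin 2) = 0 := h2
    exact absurd h3 (by decide)
  have hne1U : ({1} : Set (Fin 2)) ≠ Set.univ := by
    intro h
    have h2 : (0 : Fin 2) ∈ ({1} : Set (Fin 2)) := h.symm ▸ Set.mem_univ 0
    have h3 : (0 : Fin 2) = 1 := h2
    exact absurd h3 (by decide)
  have hFel : ∀ X : F cs, (X : Set (Fin 2)) = {0} ∨ (X : Set (Fin 2)) = {1} ∨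
      (X : Set (Fin 2)) = Set.univ := by
    intro X
    have hX := (Set.ext_iff.mp hF (X : Set (Fin 2))).mp X.2
    simpa using hX
  -- Omega0 facts
  have hOm0 : ∀ (X : F cs) (Y : Set (Fin 2)), Y ∈ Omega0 cs X →
      (X : Set (Fin 2)) = Set.univ ∧ (Y = {0} ∨ Y = {1}) := by
    rintro X Y ⟨hYF, hss⟩
    have hYF' := hYF
    rw [hF] at hYF'
    simp only [Set.mem_insert_iff, Set.mem_singleton_iff] at hYF'
    rcases hFel X with hX | hX | hX
    · exfalso
      rw [hX] at hss
      exact hss.ne (hYF.1.subset_singleton_iff.mp hss.subset)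
    · exfalso
      rw [hX] at hss
      exact hss.ne (hYF.1.subset_singleton_iff.mp hss.subset)
    · refine ⟨hX, ?_⟩
      rw [hX] at hss
      rcases hYF' with rfl | rfl | rfl
      · exact Or.inl rfl
      · exact Or.inr rfl
      · exact absurd rfl hss.ne
  have hInf : ∀ (X Y : F cs), (Y : Set (Fin 2)) ∈ OmegaInf cs X → False := by
    rintro X Y ⟨hYF, hnirr⟩
    apply hnirr
    rcases setFin2 ((X : Set (Fin 2)) ∪ (Y : Set (Fin 2))) with hE | hU | hU | hU
    · exfalso
      obtain ⟨x, hx⟩ := X.2.1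
      have hxm : x ∈ (X : Set (Fin 2)) ∪ (Y : Set (Fin 2)) := Or.inl hx
      rw [hE] at hxm
      exact hxm
    · rw [hU]; exact irrS 0
    · rw [hU]; exact irrS 1
    · rw [hU]; exact irrU
  -- the three generators
  have relsq : ∀ X : F cs, gen cs X * gen cs X = 1 := by
    intro X
    have hmem : FreeGroup.of X * FreeGroup.of X ∈ cactusRels cs := Or.inl ⟨X, rfl⟩
    have h2 := presented_rel hmem
    rwa [map_mul] at h2
  have hg0 : gen cs ⟨{0}, h0⟩ * gen cs ⟨{0}, h0⟩ = 1 := relsq _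
  have hgS : gen cs ⟨Set.univ, hS⟩ * gen cs ⟨Set.univ, hS⟩ = 1 := relsq _
  have relSX0 : gen cs ⟨Set.univ, hS⟩ * gen cs ⟨{0}, h0⟩
      = gen cs ⟨{1}, h1⟩ * gen cs ⟨Set.univ, hS⟩ := by
    have hom0 : (({0} : Set (Fin 2))) ∈ Omega0 cs Set.univ := by
      refine ⟨h0, ?_⟩
      rw [Set.ssubset_iff_subset_ne]
      exact ⟨Set.subset_univ _, hne0U⟩
    have hmem : (FreeGroup.of (⟨Set.univ, hS⟩ : F cs) * FreeGroup.of (⟨{0}, h0⟩ : F cs) *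
        (FreeGroup.of (⟨{1}, h1⟩ : F cs) * FreeGroup.of (⟨Set.univ, hS⟩ : F cs))⁻¹)
        ∈ cactusRels cs :=
      Or.inr (Or.inl ⟨⟨Set.univ, hS⟩, ⟨{0}, h0⟩, ⟨{1}, h1⟩, hom0, hS0.symm, rfl⟩)
    have h2 := presented_rel hmem
    rw [map_mul, map_mul, map_inv, map_mul] at h2
    exact mul_inv_eq_one.mp h2
  -- the map to the coproduct
  have hcu2 : (Monoid.Coprod.inl (Multiplicative.ofAdd (1 : ZMod 2)) :
      Monoid.Coprod (Multiplicative (ZMod 2)) (Multiplicative (ZMod 2))) *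
      Monoid.Coprod.inl (Multiplicative.ofAdd (1 : ZMod 2)) = 1 := by
    rw [← map_mul]
    have h2 : (Multiplicative.ofAdd (1 : ZMod 2)) * Multiplicative.ofAdd (1 : ZMod 2) = 1 := by
      decide
    rw [h2, map_one]
  have hcv2 : (Monoid.Coprod.inr (Multiplicative.ofAdd (1 : ZMod 2)) :
      Monoid.Coprod (Multiplicative (ZMod 2)) (Multiplicative (ZMod 2))) *
      Monoid.Coprod.inr (Multiplicative.ofAdd (1 : ZMod 2)) = 1 := by
    rw [← map_mul]
    have h2 : (Multiplicative.ofAdd (1 : ZMod 2)) * Multiplicative.ofAdd (1 : ZMod 2) = 1 := by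
      decide
    rw [h2, map_one]
  have fmap0 : ∀ X : F cs, (X : Set (Fin 2)) = {0} →
      fmap cs X = Monoid.Coprod.inl (Multiplicative.ofAdd 1) := by
    intro X h
    simp only [fmap]
    rw [if_pos h]
  have fmapS : ∀ X : F cs, (X : Set (Fin 2)) = Set.univ →
      fmap cs X = Monoid.Coprod.inr (Multiplicative.ofAdd 1) := by
    intro X h
    simp only [fmap]
    rw [if_neg (show ¬(X : Set (Fin 2)) = {0} from fun hh => hne0U (hh.symm.trans h)),
      if_pos h]
  have fmap1 : ∀ X : F cs, (X : Set (Fin 2)) = {1} →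
      fmap cs X = Monoid.Coprod.inr (Multiplicative.ofAdd 1) *
        Monoid.Coprod.inl (Multiplicative.ofAdd 1) *
        Monoid.Coprod.inr (Multiplicative.ofAdd 1) := by
    intro X h
    simp only [fmap]
    rw [if_neg (show ¬(X : Set (Fin 2)) = {0} from fun hh => hne01 (hh.symm.trans h)),
      if_neg (show ¬(X : Set (Fin 2)) = Set.univ from fun hh => hne1U (h.symm.trans hh))]
  have hrels : ∀ r ∈ cactusRels cs, FreeGroup.lift (fmap cs) r = 1 := by
    rintro r (⟨X, rfl⟩ | ⟨X, Y, Z, hY, hZ, rfl⟩ | ⟨X, Y, hY, rfl⟩)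
    · simp only [map_mul, FreeGroup.lift_apply_of]
      rcases hFel X with h | h | h
      · rw [fmap0 X h]; exact hcu2
      · rw [fmap1 X h]; exact sq_one_conj hcu2 hcv2
      · rw [fmapS X h]; exact hcv2
    · obtain ⟨hXuniv, hYcase⟩ := hOm0 X Y hY
      simp only [map_mul, map_inv, FreeGroup.lift_apply_of]
      rcases hYcase with hY0 | hY1
      · have hZ1 : (Z : Set (Fin 2)) = {1} := by rw [hZ, hXuniv, hY0, hS0]
        rw [fmapS X hXuniv, fmap0 Y hY0, fmap1 Z hZ1]
        refine mul_inv_eq_one.mpr ?_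
        rw [mul_assoc (Monoid.Coprod.inr (Multiplicative.ofAdd 1) *
          Monoid.Coprod.inl (Multiplicative.ofAdd 1)), hcv2, mul_one]
      · have hZ0 : (Z : Set (Fin 2)) = {0} := by rw [hZ, hXuniv, hY1, hS1]
        rw [fmapS X hXuniv, fmap1 Y hY1, fmap0 Z hZ0]
        refine mul_inv_eq_one.mpr ?_
        rw [mul_assoc (Monoid.Coprod.inr (Multiplicative.ofAdd 1))
          (Monoid.Coprod.inl (Multiplicative.ofAdd 1)),
          ← mul_assoc (Monoid.Coprod.inr (Multiplicative.ofAdd 1))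
          (Monoid.Coprod.inr (Multiplicative.ofAdd 1)), hcv2, one_mul]
    · exact absurd hY (fun h => hInf X Y h)
  let φ : Cactus cs →* Monoid.Coprod (Multiplicative (ZMod 2)) (Multiplicative (ZMod 2)) :=
    PresentedGroup.toGroup hrels
  have hφgen : ∀ X : F cs, φ (gen cs X) = fmap cs X := fun X => PresentedGroup.toGroup.of hrels
  let ψ : Monoid.Coprod (Multiplicative (ZMod 2)) (Multiplicative (ZMod 2)) →* Cactus cs :=
    Monoid.Coprod.lift (involHom (gen cs ⟨{0}, h0⟩) hg0) (involHom (gen cs ⟨Set.univ, hS⟩) hgS)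
  have hψu : ψ (Monoid.Coprod.inl (Multiplicative.ofAdd 1)) = gen cs ⟨{0}, h0⟩ := by
    show Monoid.Coprod.lift _ _ _ = _
    rw [Monoid.Coprod.lift_apply_inl, involHom_apply]
  have hψv : ψ (Monoid.Coprod.inr (Multiplicative.ofAdd 1)) = gen cs ⟨Set.univ, hS⟩ := by
    show Monoid.Coprod.lift _ _ _ = _
    rw [Monoid.Coprod.lift_apply_inr, involHom_apply]
  have hgen1 : gen cs ⟨Set.univ, hS⟩ * gen cs ⟨{0}, h0⟩ * gen cs ⟨Set.univ, hS⟩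
      = gen cs ⟨{1}, h1⟩ := by
    rw [relSX0, mul_assoc, hgS, mul_one]
  have hψφ : ψ.comp φ = MonoidHom.id (Cactus cs) := by
    apply PresentedGroup.ext
    intro X
    show ψ (φ (PresentedGroup.of X)) = PresentedGroup.of X
    rcases hFel X with h | h | h
    · have hXX : X = ⟨{0}, h0⟩ := Subtype.ext h
      rw [hXX]
      rw [show φ (PresentedGroup.of (⟨{0}, h0⟩ : F cs)) = fmap cs ⟨{0}, h0⟩ from hφgen _,
        fmap0 _ rfl, hψu]
      rfl
    · have hXX : X = ⟨{1}, h1⟩ := Subtype.ext h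
      rw [hXX]
      rw [show φ (PresentedGroup.of (⟨{1}, h1⟩ : F cs)) = fmap cs ⟨{1}, h1⟩ from hφgen _,
        fmap1 _ rfl, map_mul, map_mul, hψu, hψv, hgen1]
      rfl
    · have hXX : X = ⟨Set.univ, hS⟩ := Subtype.ext h
      rw [hXX]
      rw [show φ (PresentedGroup.of (⟨Set.univ, hS⟩ : F cs)) = fmap cs ⟨Set.univ, hS⟩ from
        hφgen _, fmapS _ rfl, hψv]
      rfl
  have hmul2 : ∀ y : Multiplicative (ZMod 2), y = 1 ∨ y = Multiplicative.ofAdd 1 := by decide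
  have hφψ : φ.comp ψ = MonoidHom.id _ := by
    apply Monoid.Coprod.hom_ext
    · apply MonoidHom.ext; intro x
      rcases hmul2 x with rfl | rfl
      · simp only [MonoidHom.comp_apply, map_one, MonoidHom.id_apply]
      · simp only [MonoidHom.comp_apply, MonoidHom.id_apply]
        rw [hψu, hφgen, fmap0 _ rfl]
    · apply MonoidHom.ext; intro x
      rcases hmul2 x with rfl | rfl
      · simp only [MonoidHom.comp_apply, map_one, MonoidHom.id_apply]
      · simp only [MonoidHom.comp_apply, MonoidHom.id_apply]
        rw [hψv, hφgen, fmapS _ rfl]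
  refine ⟨hF, h0, h1, hS, ?_, MonoidHom.toMulEquiv φ ψ hψφ hφψ, ?_, ?_, ?_⟩
  · -- closure
    rw [eq_top_iff, ← PresentedGroup.closure_range_of (cactusRels cs), Subgroup.closure_le]
    rintro x ⟨X, rfl⟩
    rcases hFel X with h | h | h
    · have hXX : X = ⟨{0}, h0⟩ := Subtype.ext h
      rw [hXX]
      exact Subgroup.subset_closure (Set.mem_insert _ _)
    · have hXX : X = ⟨{1}, h1⟩ := Subtype.ext h
      rw [hXX]
      have hmem0 : gen cs ⟨{0}, h0⟩ ∈ Subgroup.closure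
          {gen cs ⟨{0}, h0⟩, gen cs ⟨Set.univ, hS⟩} :=
        Subgroup.subset_closure (Set.mem_insert _ _)
      have hmemS : gen cs ⟨Set.univ, hS⟩ ∈ Subgroup.closure
          {gen cs ⟨{0}, h0⟩, gen cs ⟨Set.univ, hS⟩} :=
        Subgroup.subset_closure (Set.mem_insert_of_mem _ rfl)
      have h2 : gen cs ⟨{1}, h1⟩ ∈ Subgroup.closure
          {gen cs ⟨{0}, h0⟩, gen cs ⟨Set.univ, hS⟩} := by
        rw [← hgen1]
        exact mul_mem (mul_mem hmemS hmem0) hmemS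
      exact h2
    · have hXX : X = ⟨Set.univ, hS⟩ := Subtype.ext h
      rw [hXX]
      exact Subgroup.subset_closure (Set.mem_insert_of_mem _ rfl)
  · show φ (gen cs ⟨{0}, h0⟩) = _
    rw [hφgen, fmap0 _ rfl]
  · show φ (gen cs ⟨Set.univ, hS⟩) = _
    rw [hφgen, fmapS _ rfl]
  · show φ (gen cs ⟨{1}, h1⟩) = _
    rw [hφgen, fmap1 _ rfl]

end CactusFormal
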